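/- arXiv:2011.08731 — 7 statements merged into one kernel-verified Lean document; each statement's English description precedes it below -/
import Mathlib

section
/- Let n ≥ 1, let a_{ij} ≥ 0 for i ≠ j, and let π₁,…,πₙ > 0 satisfy the detailed-balance condition π_i a_{ij} = π_j a_{ji} for all i ≠ j. Then for every u ∈ (0,∞)ⁿ and every z ∈ ℝⁿ the cross-diffusion terms are nonnegative: Σ_{i≠j} (π_i a_{ij} u_j / u_i) z_i² + Σ_{i≠j} π_i a_{ij} z_i z_j ≥ 0. -/
lemma swap_double_sum {n : ℕ} (F : Fin n → Fin n → ℝ) :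
    ∑ i, ∑ j ∈ Finset.univ.erase i, F i j
      = ∑ i, ∑ j ∈ Finset.univ.erase i, F j i := by
  have e : ∀ (G : Fin n → Fin n → ℝ),
      ∑ i, ∑ j ∈ Finset.univ.erase i, G i j
        = ∑ i : Fin n, ∑ j : Fin n, if j ≠ i then G i j else 0 := by
    intro G
    refine Finset.sum_congr rfl fun i _ => ?_
    rw [← Finset.sum_filter, Finset.filter_ne']
  rw [e, e]
  rw [Finset.sum_comm]
  refine Finset.sum_congr rfl fun i _ => Finset.sum_congr rfl fun j _ => ?_
  simp [ne_comm]

/-- Under the detailed-balance condition `π_i a_{ij} = π_j a_{ji}` (for `i ≠ j`,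
with `a_{ij} ≥ 0` for `i ≠ j` and `π_i > 0`), the cross-diffusion terms are
nonnegative: for all `u ∈ (0,∞)ⁿ` and `z ∈ ℝⁿ`,
`∑_{i≠j} (π_i a_{ij} u_j / u_i) z_i² + ∑_{i≠j} π_i a_{ij} z_i z_j ≥ 0`. -/
theorem detailed_balance_cross_terms_nonneg
    (n : ℕ) (hn : 1 ≤ n) (a : Fin n → Fin n → ℝ) (p : Fin n → ℝ)
    (ha : ∀ i j, i ≠ j → 0 ≤ a i j) (hp : ∀ i, 0 < p i)
    (hdb : ∀ i j, i ≠ j → p i * a i j = p j * a j i)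
    (u z : Fin n → ℝ) (hu : ∀ i, 0 < u i) :
    0 ≤ (∑ i, ∑ j ∈ Finset.univ.erase i, (p i * a i j * u j / u i) * z i ^ 2) +
        ∑ i, ∑ j ∈ Finset.univ.erase i, p i * a i j * z i * z j := by
  set G : Fin n → Fin n → ℝ :=
    fun i j => p i * a i j * u j / u i * z i ^ 2 + p i * a i j * z i * z j with hG
  have hsum : (∑ i, ∑ j ∈ Finset.univ.erase i, (p i * a i j * u j / u i) * z i ^ 2) +
      ∑ i, ∑ j ∈ Finset.univ.erase i, p i * a i j * z i * z j
      = ∑ i, ∑ j ∈ Finset.univ.erase i, G i j := by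
    rw [← Finset.sum_add_distrib]
    exact Finset.sum_congr rfl fun i _ => by rw [← Finset.sum_add_distrib]
  rw [hsum]
  have key : 0 ≤ ∑ i, ∑ j ∈ Finset.univ.erase i, (G i j + G j i) := by
    refine Finset.sum_nonneg fun i _ => Finset.sum_nonneg fun j hj => ?_
    have hij : j ≠ i := Finset.ne_of_mem_erase hj
    have hdb' : p j * a j i = p i * a i j := hdb j i hij
    have hc : 0 ≤ p i * a i j := mul_nonneg (hp i).le (ha i j (Ne.symm hij))
    have hui := hu i; have huj := hu j
    simp only [hG, hdb']
    have h1 : p i * a i j * u j / u i = p i * a i j * (u j / u i) := by ring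
    have h2 : p i * a i j * u i / u j = p i * a i j * (u i / u j) := by ring
    rw [h1, h2]
    have expand : p i * a i j * (u j / u i) * z i ^ 2 + p i * a i j * z i * z j +
        (p i * a i j * (u i / u j) * z j ^ 2 + p i * a i j * z j * z i)
        = p i * a i j * ((u j / u i) * z i ^ 2 + (u i / u j) * z j ^ 2 + 2 * z i * z j) := by
      ring
    rw [expand]
    apply mul_nonneg hc
    have h3 : (u j / u i) * z i ^ 2 + (u i / u j) * z j ^ 2 + 2 * z i * z j
        = (u j * z i + u i * z j) ^ 2 / (u i * u j) := by
      field_simp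
      ring
    rw [h3]
    positivity
  have hswap := swap_double_sum (n := n) G
  have split : ∑ i, ∑ j ∈ Finset.univ.erase i, (G i j + G j i)
      = (∑ i, ∑ j ∈ Finset.univ.erase i, G i j)
        + ∑ i, ∑ j ∈ Finset.univ.erase i, G j i := by
    rw [← Finset.sum_add_distrib]
    exact Finset.sum_congr rfl fun i _ => Finset.sum_add_distrib
  rw [split, ← hswap] at key
  linarith
end

section
/- Let n ≥ 1, let a_{i0} ≥ 0, a_{ii} > 0 for i = 1,…,n and a_{ij} ≥ 0 for i ≠ j, and let π₁,…,πₙ > 0 satisfy the detailed-balance condition π_i a_{ij} = π_j a_{ji} for i ≠ j. Define the SKT diffusion matrix A(u) with entries A_{ij}(u) = δ_{ij}(a_{i0} + Σ_{k=1}^n a_{ik} u_k) + a_{ij} u_i and the weighted Boltzmann entropy h(u) = Σ_{i=1}^n π_i(u_i(log u_i − 1) + 1), whose Hessian is h''(u) = diag(π_i/u_i). Then for all u ∈ (0,∞)ⁿ and all z ∈ ℝⁿ one has zᵀ h''(u) A(u) z ≥ c_A |z|² with c_A = min_{i=1,…,n} π_i a_{ii} > 0. -/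
/-- Coercivity of the entropy-weighted SKT diffusion matrix under detailed balance:
with `A_{ij}(u) = δ_{ij}(a_{i0} + ∑_k a_{ik} u_k) + a_{ij} u_i` and
`h''(u) = diag(π_i / u_i)`, one has `zᵀ h''(u) A(u) z ≥ c_A |z|²` with
`c_A = min_i π_i a_{ii} > 0`. -/
theorem skt_coercivity_detailed_balance
    (n : ℕ) (hn : 1 ≤ n) (a0 : Fin n → ℝ) (a : Fin n → Fin n → ℝ) (p : Fin n → ℝ)
    (ha0 : ∀ i, 0 ≤ a0 i) (haii : ∀ i, 0 < a i i) (haij : ∀ i j, i ≠ j → 0 ≤ a i j)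
    (hp : ∀ i, 0 < p i) (hdb : ∀ i j, i ≠ j → p i * a i j = p j * a j i)
    (u z : Fin n → ℝ) (hu : ∀ i, 0 < u i) :
    (Finset.univ.inf' (Finset.univ_nonempty_iff.mpr ⟨⟨0, hn⟩⟩) fun i => p i * a i i) *
        ∑ i, z i ^ 2 ≤
      ∑ i, ∑ j, z i * ((p i / u i) *
        ((if i = j then a0 i + ∑ k, a i k * u k else 0) + a i j * u i)) * z j := by
  have hu' : ∀ i, u i ≠ 0 := fun i => (hu i).ne'
  set m := Finset.univ.inf' (Finset.univ_nonempty_iff.mpr ⟨⟨0, hn⟩⟩) (fun i => p i * a i i) with mdef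
  have hmle : ∀ i : Fin n, m ≤ p i * a i i := fun i => Finset.inf'_le _ (Finset.mem_univ i)
  set G : Fin n → Fin n → ℝ := fun i j => p i * a i j * (z i ^ 2 * (u j / u i) + z i * z j) with Gdef
  have hRHS : ∑ i, ∑ j, z i * ((p i / u i) *
        ((if i = j then a0 i + ∑ k, a i k * u k else 0) + a i j * u i)) * z j
      = ∑ i, (z i ^ 2 * (p i / u i) * a0 i + ∑ j, G i j) := by
    refine Finset.sum_congr rfl fun i _ => ?_
    have h1 : ∑ j, z i * ((p i / u i) *
        ((if i = j then a0 i + ∑ k, a i k * u k else 0) + a i j * u i)) * z j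
        = ∑ j, ((if i = j then z i * ((p i / u i) * (a0 i + ∑ k, a i k * u k)) * z j else 0)
            + z i * ((p i / u i) * (a i j * u i)) * z j) := by
      refine Finset.sum_congr rfl fun j _ => ?_
      split_ifs <;> ring
    rw [h1, Finset.sum_add_distrib, Finset.sum_ite_eq]
    simp only [Finset.mem_univ, if_true]
    have h2 : z i * ((p i / u i) * (a0 i + ∑ k, a i k * u k)) * z i
        = z i ^ 2 * (p i / u i) * a0 i + ∑ k, z i ^ 2 * (p i / u i) * (a i k * u k) := by
      rw [show z i * ((p i / u i) * (a0 i + ∑ k, a i k * u k)) * z i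
          = z i ^ 2 * (p i / u i) * a0 i + z i ^ 2 * (p i / u i) * ∑ k, a i k * u k from by ring,
        Finset.mul_sum]
    rw [h2, add_assoc, ← Finset.sum_add_distrib]
    congr 1
    refine Finset.sum_congr rfl fun j _ => ?_
    simp only [Gdef]
    field_simp [hu' i]
  rw [hRHS]
  have h0 : ∀ i : Fin n, 0 ≤ z i ^ 2 * (p i / u i) * a0 i := fun i =>
    mul_nonneg (mul_nonneg (sq_nonneg _) (div_pos (hp i) (hu i)).le) (ha0 i)
  have hdiag : ∀ i : Fin n, m * z i ^ 2 ≤ G i i := by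
    intro i
    have : G i i = 2 * (p i * a i i) * z i ^ 2 := by
      simp only [Gdef]; field_simp [hu' i]; ring
    rw [this]
    have hpa : 0 ≤ p i * a i i := (mul_pos (hp i) (haii i)).le
    nlinarith [hmle i, sq_nonneg (z i)]
  have hoff : ∀ i j : Fin n, i ≠ j → 0 ≤ G i j + G j i := by
    intro i j hij
    have hc : p j * a j i = p i * a i j := (hdb i j hij).symm
    have hcn : 0 ≤ p i * a i j := mul_nonneg (hp i).le (haij i j hij)
    have hD : z i ^ 2 * (u j / u i) + z i * z j + (z j ^ 2 * (u i / u j) + z j * z i)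
        = (z i * u j + z j * u i) ^ 2 / (u i * u j) := by
      field_simp [hu' i, hu' j]
      ring
    have : G i j + G j i
        = p i * a i j * ((z i * u j + z j * u i) ^ 2 / (u i * u j)) := by
      simp only [Gdef]
      rw [hc, ← mul_add, hD]
    rw [this]
    exact mul_nonneg hcn (div_nonneg (sq_nonneg _) (mul_pos (hu i) (hu j)).le)
  have hsum : m * ∑ i, z i ^ 2 ≤ ∑ i, ∑ j, G i j := by
    have h2 : 2 * ∑ i, ∑ j, G i j = ∑ i, ∑ j, (G i j + G j i) := by
      simp only [Finset.sum_add_distrib, two_mul]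
      congr 1
      exact Finset.sum_comm
    have h3 : ∑ i, ∑ j, (if i = j then 2 * G i i else 0) ≤ ∑ i, ∑ j, (G i j + G j i) := by
      refine Finset.sum_le_sum fun i _ => Finset.sum_le_sum fun j _ => ?_
      by_cases h : i = j
      · subst h; simp [two_mul]
      · simp only [h, if_false]; exact hoff i j h
    have h4 : ∑ i, ∑ j, (if i = j then 2 * G i i else 0) = ∑ i : Fin n, 2 * G i i := by
      refine Finset.sum_congr rfl fun i _ => ?_
      rw [Finset.sum_ite_eq]; simp
    have h5 : ∑ i : Fin n, 2 * (m * z i ^ 2) ≤ ∑ i : Fin n, 2 * G i i :=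
      Finset.sum_le_sum fun i _ => by linarith [hdiag i]
    have h6 : ∑ i : Fin n, 2 * (m * z i ^ 2) = 2 * (m * ∑ i, z i ^ 2) := by
      rw [Finset.mul_sum, Finset.mul_sum]
    rw [h4] at h3
    linarith [h3, h2, h5, h6]
  calc m * ∑ i, z i ^ 2 ≤ ∑ i, ∑ j, G i j := hsum
    _ ≤ ∑ i, (z i ^ 2 * (p i / u i) * a0 i + ∑ j, G i j) :=
      Finset.sum_le_sum fun i _ => by linarith [h0 i]
end

section
/- Let n ≥ 1, let a_{i0} ≥ 0, a_{ii} > 0 for i = 1,…,n and a_{ij} ≥ 0 for i ≠ j, and suppose self-diffusion dominates cross-diffusion in the sense that η₀ := min_{i=1,…,n} ( a_{ii} − (1/4) Σ_{j=1}^n (√a_{ij} − √a_{ji})² ) > 0. Define the SKT diffusion matrix A(u) with entries A_{ij}(u) = δ_{ij}(a_{i0} + Σ_{k=1}^n a_{ik} u_k) + a_{ij} u_i and the Boltzmann entropy h(u) = Σ_{i=1}^n (u_i(log u_i − 1) + 1) (i.e. weights π_i = 1), whose Hessian is h''(u) = diag(1/u_i). Then for all u ∈ (0,∞)ⁿ and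 all z ∈ ℝⁿ one has zᵀ h''(u) A(u) z ≥ 2η₀ |z|². -/
/-!
Expanding the form, zᵀ h''(u) A(u) z is a nonnegative term `∑ a_{i0} z_i² / u_i`, twice the
self-diffusion `∑ a_{ii} z_i²`, and for each pair `i ≠ j` the cross term
`a_{ij} (u_j/u_i) z_i² + a_{ji} (u_i/u_j) z_j² + (a_{ij} + a_{ji}) z_i z_j`. Writing
`a_{ij} + a_{ji} = 2√(a_{ij} a_{ji}) + (√a_{ij} - √a_{ji})²`, the cross term is a perfect square
minus at most `½ (√a_{ij} - √a_{ji})² (z_i² + z_j²)`, and summing these losses over all pairs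
leaves at least `2 η₀ |z|²`.
-/

open Finset Real

theorem sum_sum_le_sum_sum_of_add_swap_le {ι : Type*} [Fintype ι] {f g : ι → ι → ℝ}
    (h : ∀ i j, f i j + f j i ≤ g i j + g j i) :
    ∑ i, ∑ j, f i j ≤ ∑ i, ∑ j, g i j := by
  have hsymm : ∀ F : ι → ι → ℝ, ∑ i, ∑ j, (F i j + F j i) = 2 * ∑ i, ∑ j, F i j := by
    intro F
    simp only [sum_add_distrib]
    rw [sum_comm (f := fun i j => F j i), two_mul]
  have := sum_le_sum fun i (_ : i ∈ univ) => sum_le_sum fun j (_ : j ∈ univ) => h i j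
  rw [hsymm f, hsymm g] at this
  linarith

theorem neg_half_sq_sub_sqrt_le {b c v w : ℝ} (hb : 0 ≤ b) (hc : 0 ≤ c) (hv : 0 < v)
    (hw : 0 < w) (x y : ℝ) :
    -(1 / 2) * (√b - √c) ^ 2 * (x ^ 2 + y ^ 2) ≤
      b * (w / v) * x ^ 2 + c * (v / w) * y ^ 2 + (b + c) * (x * y) := by
  have hsq : ∀ α β : ℝ, α ^ 2 * (w / v) * x ^ 2 + β ^ 2 * (v / w) * y ^ 2
      + (α ^ 2 + β ^ 2) * (x * y) + (1 / 2) * (α - β) ^ 2 * (x ^ 2 + y ^ 2)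
      = v / w * (α * (w / v) * x + β * y) ^ 2 + (1 / 2) * ((α - β) * (x + y)) ^ 2 := by
    intro α β
    field_simp
    ring
  have hbc := hsq √b √c
  rw [sq_sqrt hb, sq_sqrt hc] at hbc
  linarith [show 0 ≤ v / w * (√b * (w / v) * x + √c * y) ^ 2 by positivity,
    sq_nonneg ((√b - √c) * (x + y))]

theorem sum_self_sub_cross_le {ι : Type*} [Fintype ι] [DecidableEq ι] {a : ι → ι → ℝ}
    (ha : ∀ i j, i ≠ j → 0 ≤ a i j) {u : ι → ℝ} (hu : ∀ i, 0 < u i) (z : ι → ℝ) :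
    ∑ i, (2 * a i i - (1 / 2) * ∑ j, (√(a i j) - √(a j i)) ^ 2) * z i ^ 2 ≤
      ∑ i, ∑ j, a i j * (u j / u i * z i ^ 2 + z i * z j) := by
  set s : ι → ι → ℝ := fun i j => (√(a i j) - √(a j i)) ^ 2
  have hs_symm : ∀ i j, s j i = s i j := fun i j => by simp only [s]; ring
  have hlhs : ∑ i, (2 * a i i - (1 / 2) * ∑ j, s i j) * z i ^ 2 =
      ∑ i, ∑ j, ((if i = j then 2 * a i i * z i ^ 2 else 0) - (1 / 2) * s i j * z i ^ 2) := by
    refine sum_congr rfl fun i _ => ?_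
    rw [sum_sub_distrib, sum_ite_eq, if_pos (mem_univ i), ← sum_mul, ← mul_sum]
    ring
  rw [hlhs]
  refine sum_sum_le_sum_sum_of_add_swap_le fun i j => ?_
  rcases eq_or_ne i j with rfl | hij
  · simp only [s, sub_self, if_true, div_self (hu i).ne']
    exact le_of_eq (by ring)
  · have hpair := neg_half_sq_sub_sqrt_le (ha i j hij) (ha j i hij.symm) (hu i) (hu j)
      (z i) (z j)
    simp only [if_neg hij, if_neg hij.symm, hs_symm j i]
    linarith

theorem skt_entropy_quadratic_form_eq {ι : Type*} [Fintype ι] [DecidableEq ι]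
    (a0 : ι → ℝ) (a : ι → ι → ℝ) {u : ι → ℝ} (hu : ∀ i, 0 < u i) (z : ι → ℝ) :
    ∑ i, ∑ j, z i * ((1 / u i) *
        ((if i = j then a0 i + ∑ k, a i k * u k else 0) + a i j * u i)) * z j =
      ∑ i, a0 i / u i * z i ^ 2 + ∑ i, ∑ j, a i j * (u j / u i * z i ^ 2 + z i * z j) := by
  rw [← sum_add_distrib]
  refine sum_congr rfl fun i _ => ?_
  have hui := (hu i).ne'
  simp only [mul_add, add_mul, sum_add_distrib, mul_ite, ite_mul, mul_zero, zero_mul,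
    sum_ite_eq, mem_univ, if_true, mul_sum, sum_mul]
  rw [add_assoc]
  congr 1
  · field_simp
  · congr 1
    · exact sum_congr rfl fun j _ => by field_simp
    · exact sum_congr rfl fun j _ => by field_simp

theorem skt_coercivity_self_diffusion_dominance_general
    (n : ℕ) (hn : 1 ≤ n) (a0 : Fin n → ℝ) (a : Fin n → Fin n → ℝ)
    (ha0 : ∀ i, 0 ≤ a0 i) (haij : ∀ i j, i ≠ j → 0 ≤ a i j)
    (u z : Fin n → ℝ) (hu : ∀ i, 0 < u i) :
    2 * (Finset.univ.inf' (Finset.univ_nonempty_iff.mpr ⟨⟨0, hn⟩⟩)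
        (fun i => a i i - (1 / 4) * ∑ j, (Real.sqrt (a i j) - Real.sqrt (a j i)) ^ 2)) *
        ∑ i, z i ^ 2 ≤
      ∑ i, ∑ j, z i * ((1 / u i) *
        ((if i = j then a0 i + ∑ k, a i k * u k else 0) + a i j * u i)) * z j := by
  set η := Finset.univ.inf' (Finset.univ_nonempty_iff.mpr ⟨⟨0, hn⟩⟩)
    (fun i => a i i - (1 / 4) * ∑ j, (√(a i j) - √(a j i)) ^ 2)
  have hη_le : ∀ i, η ≤ a i i - (1 / 4) * ∑ j, (√(a i j) - √(a j i)) ^ 2 :=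
    fun i => inf'_le _ (mem_univ i)
  rw [skt_entropy_quadratic_form_eq a0 a hu z]
  calc 2 * η * ∑ i, z i ^ 2
      ≤ ∑ i, (2 * a i i - (1 / 2) * ∑ j, (√(a i j) - √(a j i)) ^ 2) * z i ^ 2 := by
        rw [mul_sum]
        exact sum_le_sum fun i _ =>
          mul_le_mul_of_nonneg_right (by linarith [hη_le i]) (sq_nonneg _)
    _ ≤ ∑ i, ∑ j, a i j * (u j / u i * z i ^ 2 + z i * z j) := sum_self_sub_cross_le haij hu z
    _ ≤ _ := le_add_of_nonneg_left <| sum_nonneg fun i _ =>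
        mul_nonneg (div_nonneg (ha0 i) (hu i).le) (sq_nonneg _)

/-- Coercivity of the entropy-weighted SKT diffusion matrix when self-diffusion
dominates cross-diffusion: if
`η₀ = min_i (a_{ii} - (1/4) ∑_j (√a_{ij} - √a_{ji})²) > 0`, then with
`A_{ij}(u) = δ_{ij}(a_{i0} + ∑_k a_{ik} u_k) + a_{ij} u_i` and `h''(u) = diag(1/u_i)`
one has `zᵀ h''(u) A(u) z ≥ 2η₀ |z|²`. -/
theorem skt_coercivity_self_diffusion_dominance
    (n : ℕ) (hn : 1 ≤ n) (a0 : Fin n → ℝ) (a : Fin n → Fin n → ℝ)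
    (ha0 : ∀ i, 0 ≤ a0 i) (haii : ∀ i, 0 < a i i) (haij : ∀ i j, i ≠ j → 0 ≤ a i j)
    (hη : 0 < Finset.univ.inf' (Finset.univ_nonempty_iff.mpr ⟨⟨0, hn⟩⟩)
      (fun i => a i i - (1 / 4) * ∑ j, (Real.sqrt (a i j) - Real.sqrt (a j i)) ^ 2))
    (u z : Fin n → ℝ) (hu : ∀ i, 0 < u i) :
    2 * (Finset.univ.inf' (Finset.univ_nonempty_iff.mpr ⟨⟨0, hn⟩⟩)
        (fun i => a i i - (1 / 4) * ∑ j, (Real.sqrt (a i j) - Real.sqrt (a j i)) ^ 2)) *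
        ∑ i, z i ^ 2 ≤
      ∑ i, ∑ j, z i * ((1 / u i) *
        ((if i = j then a0 i + ∑ k, a i k * u k else 0) + a i j * u i)) * z j :=
  skt_coercivity_self_diffusion_dominance_general n hn a0 a ha0 haij u z hu
end

section
/- Let n ≥ 1, let a_{i0} > 0, a_{ii} > 0 for i = 1,…,n, a_{ij} ≥ 0 for i ≠ j, and let π₁,…,πₙ > 0 satisfy the detailed-balance condition π_i a_{ij} = π_j a_{ji} for i ≠ j. Define the SKT diffusion matrix A(u) with entries A_{ij}(u) = δ_{ij}(a_{i0} + Σ_{k=1}^n a_{ik} u_k) + a_{ij} u_i and the weighted Boltzmann entropy h(u) = Σ_{i=1}^n π_i(u_i(log u_i − 1) + 1), whose Hessian is h''(u) = diag(π_i/u_i). Then for all u ∈ (0,∞)ⁿ and all z ∈ ℝⁿ one has the strengthened coercivity zᵀ h''(u) A(u) z ≥ c_A |z|² + c'_A Σ_{i=1}^n z_i²/u_i, with c_A = min_{i} π_i a_{ii} > 0 and c'_A = min_{i} π_i a_{i0} > 0. -/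
/-!
Splitting `h''(u) A(u)` as the reaction part `diag(π_i a_{i0} / u_i)` plus the cross-diffusion
part, and writing `b_{ij} = π_i a_{ij}` (symmetric by detailed balance), the cross-diffusion part
of the quadratic form is `∑_{ij} b_{ij} (u_j z_i² / u_i + z_i z_j)`. Symmetrizing in `(i, j)` turns
each pair into `b_{ij} (u_j z_i + u_i z_j)² / (u_i u_j) ≥ 0`, and only the diagonal terms
`2 b_{ii} z_i²` need to be kept; this gives `c_A |z|²`, while the reaction part gives
`c'_A ∑ z_i² / u_i`.
-/

open Finset

theorem sum_diag_le_sum_sum_of_add_swap_nonneg {ι : Type*} [Fintype ι] (g : ι → ι → ℝ)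
    (hg : ∀ i j, 0 ≤ g i j + g j i) : ∑ i, g i i ≤ ∑ i, ∑ j, g i j := by
  have hdouble : ∑ i, ∑ j, (g i j + g j i) = 2 * ∑ i, ∑ j, g i j := by
    rw [sum_congr rfl fun i _ => sum_add_distrib, sum_add_distrib,
      sum_comm (f := fun i j => g j i)]
    ring
  have hdiag : ∑ i, (g i i + g i i) ≤ ∑ i, ∑ j, (g i j + g j i) :=
    sum_le_sum fun i _ => single_le_sum (fun j _ => hg i j) (mem_univ i)
  rw [sum_add_distrib] at hdiag
  linarith

theorem inf'_mul_sum_le_sum_mul {ι : Type*} {s : Finset ι} (hs : s.Nonempty) (w x : ι → ℝ)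
    (hx : ∀ i ∈ s, 0 ≤ x i) : s.inf' hs w * ∑ i ∈ s, x i ≤ ∑ i ∈ s, w i * x i := by
  rw [mul_sum]
  exact sum_le_sum fun i hi => mul_le_mul_of_nonneg_right (inf'_le w hi) (hx i hi)

theorem cross_term_add_swap_eq (b ui uj zi zj : ℝ) (hui : ui ≠ 0) (huj : uj ≠ 0) :
    b * (uj / ui * zi ^ 2 + zi * zj) + b * (ui / uj * zj ^ 2 + zj * zi) =
      b * ((uj * zi + ui * zj) ^ 2 / (ui * uj)) := by
  field_simp
  ring

theorem two_mul_sum_diag_le_cross_diffusion {ι : Type*} [Fintype ι] (b : ι → ι → ℝ)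
    (hb_symm : ∀ i j, b i j = b j i) (hb : ∀ i j, 0 ≤ b i j) (u z : ι → ℝ)
    (hu : ∀ i, 0 < u i) :
    2 * ∑ i, b i i * z i ^ 2 ≤ ∑ i, ∑ j, b i j * (u j / u i * z i ^ 2 + z i * z j) := by
  have hdiag : 2 * ∑ i, b i i * z i ^ 2 = ∑ i, b i i * (u i / u i * z i ^ 2 + z i * z i) := by
    rw [mul_sum]
    exact sum_congr rfl fun i _ => by rw [div_self (hu i).ne']; ring
  rw [hdiag]
  refine sum_diag_le_sum_sum_of_add_swap_nonneg
    (fun i j => b i j * (u j / u i * z i ^ 2 + z i * z j)) fun i j => ?_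
  rw [hb_symm j i, cross_term_add_swap_eq _ _ _ _ _ (hu i).ne' (hu j).ne']
  exact mul_nonneg (hb i j) (div_nonneg (sq_nonneg _) (mul_pos (hu i) (hu j)).le)

theorem skt_quadratic_form_eq {ι : Type*} [Fintype ι] [DecidableEq ι] (a0 : ι → ℝ)
    (a : ι → ι → ℝ) (p u z : ι → ℝ) (hu : ∀ i, u i ≠ 0) :
    ∑ i, ∑ j, z i * ((p i / u i) *
        ((if i = j then a0 i + ∑ k, a i k * u k else 0) + a i j * u i)) * z j =
      ∑ i, p i * a0 i * (z i ^ 2 / u i) +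
        ∑ i, ∑ j, p i * a i j * (u j / u i * z i ^ 2 + z i * z j) := by
  rw [← sum_add_distrib]
  refine sum_congr rfl fun i _ => ?_
  simp only [mul_add, add_mul, ite_mul, mul_ite, zero_mul, mul_zero, sum_add_distrib,
    sum_ite_eq, mem_univ, if_true, mul_sum, sum_mul]
  have hui := hu i
  rw [← add_assoc]
  congr 1
  · field_simp
  · exact sum_congr rfl fun j _ => by field_simp

theorem skt_strengthened_coercivity_general
    (n : ℕ) (hn : 1 ≤ n) (a0 : Fin n → ℝ) (a : Fin n → Fin n → ℝ) (p : Fin n → ℝ)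
    (haii : ∀ i, 0 < a i i) (haij : ∀ i j, i ≠ j → 0 ≤ a i j)
    (hp : ∀ i, 0 < p i) (hdb : ∀ i j, i ≠ j → p i * a i j = p j * a j i)
    (u z : Fin n → ℝ) (hu : ∀ i, 0 < u i) :
    (Finset.univ.inf' (Finset.univ_nonempty_iff.mpr ⟨⟨0, hn⟩⟩) fun i => p i * a i i) *
        (∑ i, z i ^ 2) +
      (Finset.univ.inf' (Finset.univ_nonempty_iff.mpr ⟨⟨0, hn⟩⟩) fun i => p i * a0 i) *
        (∑ i, z i ^ 2 / u i) ≤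
      ∑ i, ∑ j, z i * ((p i / u i) *
        ((if i = j then a0 i + ∑ k, a i k * u k else 0) + a i j * u i)) * z j := by
  rw [skt_quadratic_form_eq a0 a p u z fun i => (hu i).ne']
  have hb_symm : ∀ i j, p i * a i j = p j * a j i := fun i j => by
    rcases eq_or_ne i j with rfl | hij
    exacts [rfl, hdb i j hij]
  have hb : ∀ i j, 0 ≤ p i * a i j := fun i j => by
    rcases eq_or_ne i j with rfl | hij
    exacts [(mul_pos (hp i) (haii i)).le, mul_nonneg (hp i).le (haij i j hij)]
  have hne : (univ : Finset (Fin n)).Nonempty := univ_nonempty_iff.mpr ⟨⟨0, hn⟩⟩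
  have hdiffusion := inf'_mul_sum_le_sum_mul hne (fun i => p i * a i i) (fun i => z i ^ 2)
    fun i _ => sq_nonneg (z i)
  have hreaction := inf'_mul_sum_le_sum_mul hne (fun i => p i * a0 i) (fun i => z i ^ 2 / u i)
    fun i _ => div_nonneg (sq_nonneg (z i)) (hu i).le
  have hcross := two_mul_sum_diag_le_cross_diffusion _ hb_symm hb u z hu
  have hdiag_nonneg : 0 ≤ ∑ i, p i * a i i * z i ^ 2 :=
    sum_nonneg fun i _ => mul_nonneg (hb i i) (sq_nonneg (z i))
  linarith

/-- Strengthened coercivity of the entropy-weighted SKT diffusion matrix under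
detailed balance with `a_{i0} > 0`: `zᵀ h''(u) A(u) z ≥ c_A |z|² + c'_A ∑_i z_i²/u_i`
with `c_A = min_i π_i a_{ii} > 0` and `c'_A = min_i π_i a_{i0} > 0`. -/
theorem skt_strengthened_coercivity
    (n : ℕ) (hn : 1 ≤ n) (a0 : Fin n → ℝ) (a : Fin n → Fin n → ℝ) (p : Fin n → ℝ)
    (ha0 : ∀ i, 0 < a0 i) (haii : ∀ i, 0 < a i i) (haij : ∀ i j, i ≠ j → 0 ≤ a i j)
    (hp : ∀ i, 0 < p i) (hdb : ∀ i j, i ≠ j → p i * a i j = p j * a j i)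
    (u z : Fin n → ℝ) (hu : ∀ i, 0 < u i) :
    (Finset.univ.inf' (Finset.univ_nonempty_iff.mpr ⟨⟨0, hn⟩⟩) fun i => p i * a i i) *
        (∑ i, z i ^ 2) +
      (Finset.univ.inf' (Finset.univ_nonempty_iff.mpr ⟨⟨0, hn⟩⟩) fun i => p i * a0 i) *
        (∑ i, z i ^ 2 / u i) ≤
      ∑ i, ∑ j, z i * ((p i / u i) *
        ((if i = j then a0 i + ∑ k, a i k * u k else 0) + a i j * u i)) * z j :=
  skt_strengthened_coercivity_general n hn a0 a p haii haij hp hdb u z hu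
end

section
/- Let δ ∈ (0,1) and define the seawater-intrusion diffusion matrix A(u) = [[δ u₁, δ u₁],[δ u₂, u₂]] and the entropy density h(u) = (1/δ)(u₁(log u₁ − 1) + 1) + (u₂(log u₂ − 1) + 1), whose Hessian is h''(u) = diag(1/(δ u₁), 1/u₂). Then for all u = (u₁, u₂) ∈ (0,∞)² and all z = (z₁, z₂) ∈ ℝ² one has the identity zᵀ h''(u) A(u) z = (1/2)(1 − δ)(z₁² + z₂²) + (1/2)(1 + δ)(z₁ + z₂)², and consequently zᵀ h''(u) A(u) z ≥ (1/2)(1 − δ)(z₁² + z₂²). -/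
open scoped Matrix

/-- Coercivity identity for the seawater-intrusion model: with
`A(u) = [[δu₁, δu₁], [δu₂, u₂]]` and `h''(u) = diag(1/(δu₁), 1/u₂)`, one has
`zᵀ h''(u) A(u) z = (1/2)(1-δ)(z₁² + z₂²) + (1/2)(1+δ)(z₁+z₂)²
  ≥ (1/2)(1-δ)(z₁² + z₂²)`. -/
theorem seawater_intrusion_coercivity
    (δ : ℝ) (hδ : δ ∈ Set.Ioo (0 : ℝ) 1)
    (u1 u2 : ℝ) (hu1 : 0 < u1) (hu2 : 0 < u2) (z : Fin 2 → ℝ) :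
    z ⬝ᵥ ((!![1 / (δ * u1), 0; 0, 1 / u2] * !![δ * u1, δ * u1; δ * u2, u2]) *ᵥ z) =
        (1 / 2) * (1 - δ) * (z 0 ^ 2 + z 1 ^ 2) + (1 / 2) * (1 + δ) * (z 0 + z 1) ^ 2 ∧
      (1 / 2) * (1 - δ) * (z 0 ^ 2 + z 1 ^ 2) ≤
        z ⬝ᵥ ((!![1 / (δ * u1), 0; 0, 1 / u2] * !![δ * u1, δ * u1; δ * u2, u2]) *ᵥ z) := by
  obtain ⟨hδ0, hδ1⟩ := hδ
  have hδu : δ * u1 ≠ 0 := by positivity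
  have hu2' : u2 ≠ 0 := hu2.ne'
  have key : z ⬝ᵥ ((!![1 / (δ * u1), 0; 0, 1 / u2] * !![δ * u1, δ * u1; δ * u2, u2]) *ᵥ z) =
      (1 / 2) * (1 - δ) * (z 0 ^ 2 + z 1 ^ 2) + (1 / 2) * (1 + δ) * (z 0 + z 1) ^ 2 := by
    simp [dotProduct, Matrix.mulVec, Matrix.mul_apply, Fin.sum_univ_two, Matrix.vecHead, Matrix.vecTail]
    field_simp
    ring
  refine ⟨key, ?_⟩
  rw [key]
  nlinarith [sq_nonneg (z 0 + z 1), sq_nonneg (z 0), sq_nonneg (z 1)]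
end

section
/- Let δ > 0 and define the Keller–Segel (with additional cross-diffusion) diffusion matrix A(u) = [[2u₁, −u₁],[δ, 1]] and the entropy density h(u) = (u₁(log u₁ − 1) + 1) + u₂²/(2δ), whose Hessian is h''(u) = diag(1/u₁, 1/δ). Then for all u₁ > 0, u₂ ∈ ℝ, and all z = (z₁, z₂) ∈ ℝ² one has the identity zᵀ h''(u) A(u) z = 2z₁² + δ⁻¹ z₂², and consequently zᵀ h''(u) A(u) z ≥ min{2, δ⁻¹}(z₁² + z₂²). -/
open scoped Matrix

/-- Coercivity identity for the Keller–Segel model with additional cross-diffusion: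
with `A(u) = [[2u₁, -u₁], [δ, 1]]` and `h''(u) = diag(1/u₁, 1/δ)`, one has
`zᵀ h''(u) A(u) z = 2z₁² + δ⁻¹ z₂² ≥ min{2, δ⁻¹}(z₁² + z₂²)`. -/
theorem keller_segel_cross_diffusion_coercivity
    (δ : ℝ) (hδ : 0 < δ) (u1 u2 : ℝ) (hu1 : 0 < u1) (z : Fin 2 → ℝ) :
    z ⬝ᵥ ((!![1 / u1, 0; 0, 1 / δ] * !![2 * u1, -u1; δ, 1]) *ᵥ z) =
        2 * z 0 ^ 2 + δ⁻¹ * z 1 ^ 2 ∧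
      min 2 δ⁻¹ * (z 0 ^ 2 + z 1 ^ 2) ≤
        z ⬝ᵥ ((!![1 / u1, 0; 0, 1 / δ] * !![2 * u1, -u1; δ, 1]) *ᵥ z) := by
  have heq : z ⬝ᵥ ((!![1 / u1, 0; 0, 1 / δ] * !![2 * u1, -u1; δ, 1]) *ᵥ z) =
      2 * z 0 ^ 2 + δ⁻¹ * z 1 ^ 2 := by
    simp [Matrix.mul_apply, Matrix.mulVec, dotProduct, Fin.sum_univ_two]
    field_simp
    ring
  refine ⟨heq, ?_⟩
  rw [heq]
  have h1 : min 2 δ⁻¹ * z 0 ^ 2 ≤ 2 * z 0 ^ 2 :=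
    mul_le_mul_of_nonneg_right (min_le_left _ _) (sq_nonneg _)
  have h2 : min 2 δ⁻¹ * z 1 ^ 2 ≤ δ⁻¹ * z 1 ^ 2 :=
    mul_le_mul_of_nonneg_right (min_le_right _ _) (sq_nonneg _)
  nlinarith [h1, h2]
end

section
/- Let n ≥ 1, let a_{i0} ≥ 0 and a_{ij} ≥ 0 for i,j = 1,…,n, and let π₁,…,πₙ > 0 be such that the matrix B with entries B_{ij} = π_i a_{ij} is symmetric and positive definite, with smallest eigenvalue λ₀ > 0. Define the fluid-mixture diffusion matrix A(u) with entries A_{ij}(u) = δ_{ij} a_{i0} + a_{ij} u_i and the weighted Boltzmann entropy h(u) = Σ_{i=1}^n π_i(u_i(log u_i − 1) + 1), whose Hessian is h''(u) = diag(π_i/u_i). Then for all u ∈ (0,∞)ⁿ and all z ∈ ℝⁿ one has zᵀ h''(u) A(u) z = Σ_{i=1}^n π_i a_{i0} z_i²/u_i + zᵀ B z ≥ λ₀ |z|². -/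
/-!
Multiplying `A(u)` by `h''(u) = diag(π_i/u_i)` cancels the factor `u_i` in the cross-diffusion
part, so the quadratic form splits into the nonnegative diagonal term `∑ π_i a_{i0} z_i²/u_i`
and the `u`-independent form `zᵀ B z`. The latter is at least `λ₀ |z|²` because `B - λ₀ I` is
positive semidefinite: its spectrum is that of `B` shifted by `-λ₀`.
-/

open Finset Matrix

theorem Matrix.IsHermitian.posSemidef_sub_algebraMap {ι : Type*} [Fintype ι] [DecidableEq ι]
    {A : Matrix ι ι ℝ} (hA : A.IsHermitian) {c : ℝ} (hc : ∀ i, c ≤ hA.eigenvalues i) :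
    (A - algebraMap ℝ (Matrix ι ι ℝ) c).PosSemidef := by
  refine posSemidef_iff_isHermitian_and_spectrum_nonneg.mpr
    ⟨hA.sub (isHermitian_diagonal_of_self_adjoint _ rfl), ?_⟩
  rw [← spectrum.sub_singleton_eq, hA.spectrum_real_eq_range_eigenvalues]
  rintro _ ⟨_, ⟨i, rfl⟩, _, rfl, rfl⟩
  exact sub_nonneg.mpr (hc i)

theorem Matrix.IsHermitian.mul_dotProduct_self_le {ι : Type*} [Fintype ι] [DecidableEq ι]
    {A : Matrix ι ι ℝ} (hA : A.IsHermitian) {c : ℝ} (hc : ∀ i, c ≤ hA.eigenvalues i)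
    (z : ι → ℝ) : c * (z ⬝ᵥ z) ≤ z ⬝ᵥ A *ᵥ z := by
  have := (hA.posSemidef_sub_algebraMap hc).dotProduct_mulVec_nonneg z
  rwa [Algebra.algebraMap_eq_smul_one, sub_mulVec, smul_mulVec, one_mulVec, dotProduct_sub,
    dotProduct_smul, star_trivial, smul_eq_mul, sub_nonneg] at this

theorem sum_sum_entropyHessian_diffusion_eq {ι : Type*} [Fintype ι] [DecidableEq ι]
    (a0 : ι → ℝ) (a : ι → ι → ℝ) (p u z : ι → ℝ) (hu : ∀ i, u i ≠ 0) :
    ∑ i, ∑ j, z i * ((p i / u i) * ((if i = j then a0 i else 0) + a i j * u i)) * z j =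
      ∑ i, p i * a0 i * z i ^ 2 / u i + ∑ i, ∑ j, p i * a i j * z i * z j := by
  rw [← sum_add_distrib]
  refine sum_congr rfl fun i _ => ?_
  simp only [mul_add, add_mul, sum_add_distrib, mul_ite, ite_mul, mul_zero, zero_mul,
    sum_ite_eq, mem_univ, if_true]
  congr 1
  · field_simp
  · exact sum_congr rfl fun j _ => by field_simp [hu i]

theorem fluid_mixture_coercivity_general
    (n : ℕ) (hn : 1 ≤ n) (a0 : Fin n → ℝ) (a : Fin n → Fin n → ℝ) (p : Fin n → ℝ)
    (ha0 : ∀ i, 0 ≤ a0 i) (hp : ∀ i, 0 < p i)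
    (B : Matrix (Fin n) (Fin n) ℝ) (hBdef : ∀ i j, B i j = p i * a i j)
    (hB : B.IsHermitian)
    (lam0 : ℝ)
    (hlam0 : lam0 = Finset.univ.inf' (Finset.univ_nonempty_iff.mpr ⟨⟨0, hn⟩⟩) hB.eigenvalues)
    (u z : Fin n → ℝ) (hu : ∀ i, 0 < u i) :
    (∑ i, ∑ j, z i * ((p i / u i) * ((if i = j then a0 i else 0) + a i j * u i)) * z j) =
        (∑ i, p i * a0 i * z i ^ 2 / u i) + ∑ i, ∑ j, p i * a i j * z i * z j ∧
      lam0 * ∑ i, z i ^ 2 ≤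
        ∑ i, ∑ j, z i * ((p i / u i) * ((if i = j then a0 i else 0) + a i j * u i)) * z j := by
  rw [sum_sum_entropyHessian_diffusion_eq a0 a p u z fun i => (hu i).ne']
  refine ⟨rfl, ?_⟩
  have hdiag : 0 ≤ ∑ i, p i * a0 i * z i ^ 2 / u i := sum_nonneg fun i _ => by
    have := hp i; have := ha0 i; have := hu i; positivity
  have hform : ∑ i, ∑ j, p i * a i j * z i * z j = z ⬝ᵥ B *ᵥ z := by
    simp only [dotProduct, mulVec, mul_sum, hBdef]
    exact sum_congr rfl fun i _ => sum_congr rfl fun j _ => by ring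
  have hnorm : ∑ i, z i ^ 2 = z ⬝ᵥ z := by simp only [dotProduct, sq]
  have hlam0_le : ∀ i, lam0 ≤ hB.eigenvalues i := fun i => hlam0 ▸ inf'_le _ (mem_univ i)
  have := hB.mul_dotProduct_self_le hlam0_le z
  rw [hform, hnorm]
  linarith

/-- Coercivity for the fluid-mixture model: with `A_{ij}(u) = δ_{ij} a_{i0} + a_{ij} u_i`,
`h''(u) = diag(π_i/u_i)`, and `B = (π_i a_{ij})` symmetric positive definite with
smallest eigenvalue `λ₀ > 0`, one has
`zᵀ h''(u) A(u) z = ∑_i π_i a_{i0} z_i²/u_i + zᵀ B z ≥ λ₀ |z|²`. -/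
theorem fluid_mixture_coercivity
    (n : ℕ) (hn : 1 ≤ n) (a0 : Fin n → ℝ) (a : Fin n → Fin n → ℝ) (p : Fin n → ℝ)
    (ha0 : ∀ i, 0 ≤ a0 i) (ha : ∀ i j, 0 ≤ a i j) (hp : ∀ i, 0 < p i)
    (B : Matrix (Fin n) (Fin n) ℝ) (hBdef : ∀ i j, B i j = p i * a i j)
    (hB : B.IsHermitian) (hBpd : B.PosDef)
    (lam0 : ℝ)
    (hlam0 : lam0 = Finset.univ.inf' (Finset.univ_nonempty_iff.mpr ⟨⟨0, hn⟩⟩) hB.eigenvalues)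
    (hlam0pos : 0 < lam0)
    (u z : Fin n → ℝ) (hu : ∀ i, 0 < u i) :
    (∑ i, ∑ j, z i * ((p i / u i) * ((if i = j then a0 i else 0) + a i j * u i)) * z j) =
        (∑ i, p i * a0 i * z i ^ 2 / u i) + ∑ i, ∑ j, p i * a i j * z i * z j ∧
      lam0 * ∑ i, z i ^ 2 ≤
        ∑ i, ∑ j, z i * ((p i / u i) * ((if i = j then a0 i else 0) + a i j * u i)) * z j :=
  fluid_mixture_coercivity_general n hn a0 a p ha0 hp B hBdef hB lam0 hlam0 u z hu
end
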